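/- arXiv:math/0211416 — 2 statements merged into one kernel-verified Lean document; each statement's English description precedes it below -/
import Mathlib

section
/- Let K be a field of characteristic zero and g a finite-dimensional Lie algebra over K. The symmetrization map ω : Sg → Ug defined on monomials by ω(x₁⋯xₙ) = (1/n!) Σ_{σ∈Sₙ} x_{σ(1)}⋯x_{σ(n)} is a K-linear bijection from the symmetric algebra Sg to the universal enveloping algebra Ug. -/
noncomputable section

/-- The commutation relation defining the symmetric algebra as a quotient of the
tensor algebra. -/
def symRel (K : Type*) [Field K] (g : Type*) [LieRing g] [LieAlgebra K g] :
    TensorAlgebra K g → TensorAlgebra K g → Prop :=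
  fun a b => ∃ x y : g, a = TensorAlgebra.ι K x * TensorAlgebra.ι K y ∧
    b = TensorAlgebra.ι K y * TensorAlgebra.ι K x

/-- The symmetric algebra `Sg` on the underlying vector space of `g`. -/
abbrev SgAlg (K : Type*) [Field K] (g : Type*) [LieRing g] [LieAlgebra K g] :=
  RingQuot (symRel K g)

/-- The canonical linear map `g → Sg`. -/
def symIota (K : Type*) [Field K] (g : Type*) [LieRing g] [LieAlgebra K g] :
    g →ₗ[K] SgAlg K g :=
  (RingQuot.mkAlgHom K (symRel K g)).toLinearMap.comp (TensorAlgebra.ι K)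

/-!
Fix a basis `(x_i)` of `g` indexed by a linearly ordered type. As in the classical proof of the
Poincaré–Birkhoff–Witt theorem, `g` acts on the polynomial space `K[z_i]` so that `x_i · z_μ` is
`z_{i ::ₘ μ}` plus terms of lower degree: the action is built by recursion on the degree, and
the Jacobi identity makes it a representation, hence a representation of `Ug`. Applied to
`z_∅ = 1`, the symmetrized monomial `ω(x_μ)` gives `z_μ` plus lower terms, so these elements are
linearly independent in `Ug`; they span `Ug` because reordering a word changes it only by shorter
words. So `ω` sends the monomial basis of `Sg` to a basis of `Ug`.
-/

namespace PBW

open Finsupp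

attribute [local instance] LieRing.ofAssociativeRing

section General

lemma ofFn_get_comp_perm {α : Type*} (l : List α) (σ : Equiv.Perm (Fin l.length)) :
    (List.ofFn fun i => l.get (σ i)).Perm l :=
  (Equiv.Perm.ofFn_comp_perm σ l.get).trans (by simp)

lemma adjoin_range_comp_ι_eq_top {K M A : Type*} [CommSemiring K] [AddCommMonoid M] [Module K M]
    [Semiring A] [Algebra K A] {f : TensorAlgebra K M →ₐ[K] A} (hf : Function.Surjective f) :
    Algebra.adjoin K (Set.range (f ∘ TensorAlgebra.ι K)) = ⊤ := by
  rw [Set.range_comp, Algebra.adjoin_image, TensorAlgebra.adjoin_range_ι, Algebra.map_top,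
    (AlgHom.range_eq_top f).2 hf]

lemma inv_card_smul_sum_sub_mem {K α M : Type*} [Field K] [CharZero K] [Fintype α] [Nonempty α]
    [AddCommGroup M] [Module K M] {S : Submodule K M} {v : α → M} {c : M}
    (h : ∀ a, v a - c ∈ S) : (Fintype.card α : K)⁻¹ • ∑ a, v a - c ∈ S := by
  have hc : (Fintype.card α : K)⁻¹ • ∑ _a : α, c = c := by
    rw [Finset.sum_const, Finset.card_univ, ← Nat.cast_smul_eq_nsmul K, smul_smul,
      inv_mul_cancel₀ (Nat.cast_ne_zero.2 Fintype.card_ne_zero), one_smul]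
  rw [← hc, ← smul_sub, ← Finset.sum_sub_distrib]
  exact Submodule.smul_mem _ _ (sum_mem fun a _ => h a)

lemma average_perm_sub_mem {K M : Type*} [Field K] [CharZero K] [AddCommGroup M] [Module K M]
    {n : ℕ} {S : Submodule K M} {v : Equiv.Perm (Fin n) → M} {c : M} (h : ∀ σ, v σ - c ∈ S) :
    (n.factorial : K)⁻¹ • ∑ σ, v σ - c ∈ S := by
  simpa [Fintype.card_perm] using inv_card_smul_sum_sub_mem h

/-- Evaluate a relation at an index `a` of maximal degree in its support: only the term of `a`
contributes, with coefficient `1`. -/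
theorem linearIndependent_of_sub_single_mem_supported {K α : Type*} [Ring K]
    (d : α → ℕ) {v : α → α →₀ K}
    (hv : ∀ a, v a - single a 1 ∈ supported K K {β | d β < d a}) : LinearIndependent K v := by
  rw [linearIndependent_iff]
  intro c hc
  by_contra hne
  obtain ⟨a, ha, hmax⟩ := c.support.exists_max_image d (support_nonempty_iff.2 hne)
  have hcoeff (β) (hβ : β ∈ c.support) : v β a = single β 1 a := by
    have := (mem_supported' K _).1 (hv β) a (by simpa using hmax β hβ)
    rwa [Finsupp.sub_apply, sub_eq_zero] at this
  have hca : linearCombination K v c a = c a := by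
    rw [linearCombination_apply, Finsupp.sum, Finset.sum_apply', Finset.sum_eq_single a]
    · simp [hcoeff a ha]
    · intro β hβ hβa
      simp [hcoeff β hβ, single_eq_of_ne hβa.symm]
    · simp_all
  exact mem_support_iff.1 ha (hca.symm.trans (by rw [hc]; rfl))

lemma prod_map_X_eq_monomial {K ι : Type*} [CommSemiring K] [DecidableEq ι] (μ : Multiset ι) :
    (μ.map MvPolynomial.X).prod = MvPolynomial.monomial (Multiset.toFinsupp μ) (1 : K) := by
  induction μ using Multiset.induction_on with
  | empty => simp
  | cons i μ ih =>
    rw [Multiset.map_cons, Multiset.prod_cons, ih, ← Multiset.singleton_add, map_add,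
      Multiset.toFinsupp_singleton, MvPolynomial.X, MvPolynomial.monomial_mul, one_mul]

end General

section Poly

abbrev Poly (K ι : Type*) [Zero K] : Type _ := Multiset ι →₀ K

variable (K ι : Type*) [Ring K]

def degLT (n : ℕ) : Submodule K (Poly K ι) :=
  supported K K {μ | Multiset.card μ < n}

variable {K ι}

def monomial (μ : Multiset ι) : Poly K ι := single μ 1

lemma monomial_mem_degLT {μ : Multiset ι} {n : ℕ} (h : Multiset.card μ < n) :
    monomial μ ∈ degLT K ι n :=
  single_mem_supported K 1 h

lemma degLT_mono {m n : ℕ} (h : m ≤ n) : degLT K ι m ≤ degLT K ι n :=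
  supported_mono fun _ hμ => lt_of_lt_of_le hμ h

lemma degLT_zero : degLT K ι 0 = ⊥ := by
  simp [degLT]

lemma exists_mem_degLT (p : Poly K ι) : ∃ n, p ∈ degLT K ι n :=
  ⟨p.support.sup Multiset.card + 1, (mem_supported K p).2 fun _ hμ =>
    Nat.lt_succ_of_le (Finset.le_sup (f := Multiset.card) hμ)⟩

lemma card_lt_of_mem_support {p : Poly K ι} {n : ℕ} (hp : p ∈ degLT K ι n) {μ : Multiset ι}
    (hμ : μ ∈ p.support) : Multiset.card μ < n :=
  (mem_supported K p).1 hp hμ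

lemma add_monomial_mem_degLT {p : Poly K ι} {μ : Multiset ι} {n : ℕ}
    (hp : p - monomial μ ∈ degLT K ι n) (hμ : Multiset.card μ < n) : p ∈ degLT K ι n := by
  simpa using add_mem hp (monomial_mem_degLT (K := K) hμ)

end Poly

section LeastElem

variable {ι : Type*} [LinearOrder ι]

def leastElem (μ : Multiset ι) (h : μ ≠ 0) : ι :=
  μ.toFinset.min' (Multiset.toFinset_nonempty.2 h)

lemma leastElem_mem {μ : Multiset ι} (h : μ ≠ 0) : leastElem μ h ∈ μ :=
  Multiset.mem_toFinset.1 (Finset.min'_mem _ _)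

lemma leastElem_le {μ : Multiset ι} (h : μ ≠ 0) {x : ι} (hx : x ∈ μ) : leastElem μ h ≤ x :=
  Finset.min'_le _ _ (Multiset.mem_toFinset.2 hx)

lemma leastElem_cons {j : ι} {ν : Multiset ι} (hj : ∀ x ∈ ν, j ≤ x) (h : j ::ₘ ν ≠ 0) :
    leastElem (j ::ₘ ν) h = j := by
  refine le_antisymm (leastElem_le h (Multiset.mem_cons_self j ν)) ?_
  rcases Multiset.mem_cons.1 (leastElem_mem h) with h' | h'
  · exact h'.ge
  · exact hj _ h'

lemma exists_cons_forall_le {μ : Multiset ι} (h : μ ≠ 0) :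
    ∃ j ν, μ = j ::ₘ ν ∧ ∀ x ∈ ν, j ≤ x :=
  ⟨leastElem μ h, μ.erase (leastElem μ h), (Multiset.cons_erase (leastElem_mem h)).symm,
    fun _ hx => leastElem_le h (Multiset.mem_of_mem_erase hx)⟩

end LeastElem

section Action

variable {K : Type*} [Field K] {g : Type*} [LieRing g] [LieAlgebra K g]
variable {ι : Type*} [Fintype ι] [LinearOrder ι] (b : Module.Basis ι K g)

/-- `actAux b n i μ` is `x_i · z_μ` (with `z_μ = monomial μ`) computed to recursion depth `n`,
which suffices once `n ≥ card μ`. For `μ = j ::ₘ ν` with `j < i` least in `μ`, the recursion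
`x_i z_μ = z_{i ::ₘ μ} + x_j (x_i z_ν - z_{i ::ₘ ν}) + [x_i, x_j] z_ν` is forced by
`x_i x_j = x_j x_i + [x_i, x_j]` and `x_j z_{i ::ₘ ν} = z_{i ::ₘ μ}`. -/
def actAux : ℕ → ι → Multiset ι → Poly K ι
  | 0, i, μ => monomial (i ::ₘ μ)
  | n + 1, i, μ =>
    if h : Multiset.card μ ≤ n then actAux n i μ
    else
      let j := leastElem μ (by rintro rfl; simp at h)
      let ν := μ.erase j
      if i ≤ j then monomial (i ::ₘ μ)
      else
        monomial (i ::ₘ μ) +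
          linearCombination K (actAux n j) (actAux n i ν - monomial (i ::ₘ ν)) +
          ∑ k, b.repr ⁅b i, b j⁆ k • actAux n k ν

def act (i : ι) (μ : Multiset ι) : Poly K ι := actAux b (Multiset.card μ) i μ

lemma actAux_eq_act {n : ℕ} {μ : Multiset ι} (h : Multiset.card μ ≤ n) (i : ι) :
    actAux b n i μ = act b i μ := by
  induction n with
  | zero => rw [act, Nat.le_zero.1 h]
  | succ n ih =>
    rcases h.lt_or_eq with h | h
    · rw [actAux, dif_pos (Nat.lt_succ_iff.1 h), ih (Nat.lt_succ_iff.1 h)]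
    · rw [act, h]

lemma act_of_forall_le {i : ι} {μ : Multiset ι} (hi : ∀ x ∈ μ, i ≤ x) :
    act b i μ = monomial (i ::ₘ μ) := by
  rcases eq_or_ne μ 0 with rfl | h0
  · rfl
  · obtain ⟨n, hn⟩ := Nat.exists_eq_add_one_of_ne_zero (Multiset.card_pos.2 h0).ne'
    rw [act, hn, actAux, dif_neg (by omega)]
    exact if_pos (hi _ (leastElem_mem h0))

lemma actAux_succ_cons {i j : ι} {ν : Multiset ι} (hj : ∀ x ∈ ν, j ≤ x) (hji : j < i) :
    actAux b (Multiset.card ν + 1) i (j ::ₘ ν) =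
      monomial (i ::ₘ j ::ₘ ν) +
        linearCombination K (actAux b (Multiset.card ν) j)
          (actAux b (Multiset.card ν) i ν - monomial (i ::ₘ ν)) +
        ∑ k, b.repr ⁅b i, b j⁆ k • actAux b (Multiset.card ν) k ν := by
  rw [actAux, dif_neg (by simp)]
  simp only [leastElem_cons hj, Multiset.erase_cons_head, if_neg hji.not_ge]

def actLin (i : ι) : Module.End K (Poly K ι) := linearCombination K (act b i)

def rep : g →ₗ[K] Module.End K (Poly K ι) := b.constr K (actLin b)

lemma rep_basis_monomial (i : ι) (μ : Multiset ι) : rep b (b i) (monomial μ) = act b i μ := by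
  simp [rep, actLin, monomial]

lemma rep_apply (x : g) (p : Poly K ι) : rep b x p = ∑ k, b.repr x k • actLin b k p := by
  simp [rep, Module.Basis.constr_apply_fintype]

lemma rep_apply_monomial (x : g) (μ : Multiset ι) :
    rep b x (monomial μ) = ∑ k, b.repr x k • act b k μ := by
  simp [rep_apply, actLin, monomial]

lemma linearCombination_actAux_eq_rep {n : ℕ} {p : Poly K ι} (hp : p ∈ degLT K ι (n + 1))
    (j : ι) : linearCombination K (actAux b n j) p = rep b (b j) p := by
  rw [rep, b.constr_basis, actLin, linearCombination_apply, linearCombination_apply]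
  exact sum_congr fun τ hτ => by
    rw [actAux_eq_act b (Nat.lt_succ_iff.1 (card_lt_of_mem_support hp hτ))]

lemma rep_mem_degLT_of_act {m : ℕ}
    (hact : ∀ k τ, Multiset.card τ < m → act b k τ ∈ degLT K ι (m + 1))
    (x : g) {p : Poly K ι} (hp : p ∈ degLT K ι m) : rep b x p ∈ degLT K ι (m + 1) := by
  rw [rep_apply]
  refine sum_mem fun k _ => Submodule.smul_mem _ _ ?_
  rw [actLin, linearCombination_apply]
  exact sum_mem fun τ hτ => Submodule.smul_mem _ _ (hact k τ (card_lt_of_mem_support hp hτ))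

lemma act_cons_eq_of_mem_degLT {i j : ι} {ν : Multiset ι} (hj : ∀ x ∈ ν, j ≤ x) (hji : j < i)
    (hq : act b i ν - monomial (i ::ₘ ν) ∈ degLT K ι (Multiset.card ν + 1)) :
    act b i (j ::ₘ ν) = monomial (i ::ₘ j ::ₘ ν) +
      rep b (b j) (act b i ν - monomial (i ::ₘ ν)) + rep b ⁅b i, b j⁆ (monomial ν) := by
  rw [act, Multiset.card_cons, actAux_succ_cons b hj hji, actAux_eq_act b le_rfl,
    linearCombination_actAux_eq_rep b hq, rep_apply_monomial]
  simp only [actAux_eq_act b le_rfl]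

theorem act_sub_monomial_mem (i : ι) (μ : Multiset ι) :
    act b i μ - monomial (i ::ₘ μ) ∈ degLT K ι (Multiset.card μ + 1) := by
  induction hn : Multiset.card μ using Nat.strong_induction_on generalizing i μ with
  | _ n ih =>
  subst hn
  rcases eq_or_ne μ 0 with rfl | h0
  · simp [act_of_forall_le]
  obtain ⟨j, ν, rfl, hj⟩ := exists_cons_forall_le h0
  by_cases hij : i ≤ j
  · rw [act_of_forall_le b fun x hx => ?_, sub_self]
    · exact zero_mem _
    rcases Multiset.mem_cons.1 hx with rfl | hx
    exacts [hij, hij.trans (hj x hx)]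
  have hcard : Multiset.card (j ::ₘ ν) = Multiset.card ν + 1 := Multiset.card_cons j ν
  have hq := ih _ (by omega) i ν rfl
  have hact : ∀ k τ, Multiset.card τ < Multiset.card ν + 1 →
      act b k τ ∈ degLT K ι (Multiset.card ν + 1 + 1) := fun k τ hτ =>
    add_monomial_mem_degLT (degLT_mono (by omega) (ih _ (by omega) k τ rfl))
      (by simpa using hτ)
  rw [act_cons_eq_of_mem_degLT b hj (not_le.1 hij) hq, add_sub_right_comm, add_sub_cancel_left,
    hcard]
  exact add_mem (rep_mem_degLT_of_act b hact _ hq)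
    (rep_mem_degLT_of_act b hact _ (monomial_mem_degLT (by omega)))

lemma act_cons_of_lt {i j : ι} {ν : Multiset ι} (hj : ∀ x ∈ ν, j ≤ x) (hji : j < i) :
    act b i (j ::ₘ ν) = monomial (i ::ₘ j ::ₘ ν) +
      rep b (b j) (act b i ν - monomial (i ::ₘ ν)) + rep b ⁅b i, b j⁆ (monomial ν) :=
  act_cons_eq_of_mem_degLT b hj hji (act_sub_monomial_mem b i ν)

lemma act_mem_degLT (i : ι) (μ : Multiset ι) : act b i μ ∈ degLT K ι (Multiset.card μ + 2) :=
  add_monomial_mem_degLT (degLT_mono (by omega) (act_sub_monomial_mem b i μ)) (by simp)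

lemma rep_mem_degLT (x : g) {n : ℕ} {p : Poly K ι} (hp : p ∈ degLT K ι n) :
    rep b x p ∈ degLT K ι (n + 1) :=
  rep_mem_degLT_of_act b (fun k τ hτ => degLT_mono (by omega) (act_mem_degLT b k τ)) x hp

def defect : g →ₗ[K] g →ₗ[K] Module.End K (Poly K ι) :=
  LinearMap.mk₂ K (fun x y => rep b x * rep b y - rep b y * rep b x - rep b ⁅x, y⁆)
    (fun _ _ _ => by simp only [map_add, add_lie, add_mul, mul_add]; abel)
    (fun _ _ _ => by simp only [map_smul, smul_lie, smul_mul_assoc, mul_smul_comm]; module)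
    (fun _ _ _ => by simp only [map_add, lie_add, add_mul, mul_add]; abel)
    (fun _ _ _ => by simp only [map_smul, lie_smul, smul_mul_assoc, mul_smul_comm]; module)

lemma defect_apply (x y : g) (p : Poly K ι) :
    defect b x y p = rep b x (rep b y p) - rep b y (rep b x p) - rep b ⁅x, y⁆ p := by
  rfl

lemma defect_swap (x y : g) : defect b y x = -defect b x y := by
  refine LinearMap.ext fun p => ?_
  simp only [defect_apply, ← lie_skew x y, map_neg, LinearMap.neg_apply]
  abel

lemma rep_rep_of_defect_eq_zero {x y : g} {p : Poly K ι} (h : defect b x y p = 0) :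
    rep b x (rep b y p) = rep b y (rep b x p) + rep b ⁅x, y⁆ p := by
  rw [defect_apply] at h
  linear_combination (norm := module) h

lemma defect_eq_zero_of_basis {p : Poly K ι} (h : ∀ i j, defect b (b i) (b j) p = 0)
    (x y : g) : defect b x y p = 0 := by
  have : (defect b).compr₂ (LinearMap.applyₗ p) = 0 := b.ext fun i => b.ext fun j => h i j
  exact LinearMap.congr_fun₂ this x y

lemma defect_monomial_of_forall_le {j : ι} {ν : Multiset ι} (hj : ∀ x ∈ ν, j ≤ x) (i : ι) :
    defect b (b i) (b j) (monomial ν) = 0 := by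
  have hjν : rep b (b j) (monomial ν) = monomial (j ::ₘ ν) := by
    rw [rep_basis_monomial, act_of_forall_le b hj]
  rw [defect_apply, hjν, rep_basis_monomial, rep_basis_monomial]
  rcases lt_trichotomy j i with hji | rfl | hij
  · have hji' : rep b (b j) (monomial (i ::ₘ ν)) = monomial (i ::ₘ j ::ₘ ν) := by
      rw [rep_basis_monomial, act_of_forall_le b, Multiset.cons_swap]
      simpa [hji.le] using hj
    rw [act_cons_of_lt b hj hji, map_sub, hji']
    abel
  · rw [lie_self, map_zero, LinearMap.zero_apply, sub_zero, act_of_forall_le b hj,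
      rep_basis_monomial, sub_self]
  · have hiν : ∀ x ∈ ν, i ≤ x := fun x hx => hij.le.trans (hj x hx)
    rw [act_of_forall_le b (by simpa [hij.le] using hiν), act_of_forall_le b hiν,
      rep_basis_monomial, act_cons_of_lt b hiν hij, act_of_forall_le b hj, sub_self, map_zero,
      add_zero, ← lie_skew, map_neg, LinearMap.neg_apply, Multiset.cons_swap]
    abel

lemma defect_monomial_cons {k : ι} {ν : Multiset ι} (hk : ∀ x ∈ ν, k ≤ x) {i j : ι}
    (hki : k < i) (hkj : k < j)
    (hlow : ∀ p ∈ degLT K ι (Multiset.card ν + 1), ∀ x y, defect b x y p = 0) :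
    defect b (b i) (b j) (monomial (k ::ₘ ν)) = 0 := by
  set ρ := rep b
  set z : Poly K ι := monomial ν
  have hz : monomial (k ::ₘ ν) = ρ (b k) z := by
    rw [rep_basis_monomial, act_of_forall_le b hk]
  have hcomm (x y : g) : ρ x (ρ y z) = ρ y (ρ x z) + ρ ⁅x, y⁆ z :=
    rep_rep_of_defect_eq_zero b (hlow z (monomial_mem_degLT (by omega)) x y)
  have hcomm_k (a : ι) : ρ (b a) (ρ (b k) z) = ρ (b k) (ρ (b a) z) + ρ ⁅b a, b k⁆ z :=
    rep_rep_of_defect_eq_zero b (defect_monomial_of_forall_le b hk a)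
  -- `ρ (b a) z` is `z_{a ::ₘ ν}`, on which `b k` is least, plus terms of lower degree.
  have hcomm_k' (a c : ι) (hka : k ≤ a) : ρ (b c) (ρ (b k) (ρ (b a) z)) =
      ρ (b k) (ρ (b c) (ρ (b a) z)) + ρ ⁅b c, b k⁆ (ρ (b a) z) := by
    refine rep_rep_of_defect_eq_zero b ?_
    rw [rep_basis_monomial, ← sub_add_cancel (act b a ν) (monomial (a ::ₘ ν)), map_add]
    rw [hlow _ (act_sub_monomial_mem b a ν), defect_monomial_of_forall_le b, zero_add]
    simpa [hka] using hk
  have hjac : ρ ⁅⁅b i, b j⁆, b k⁆ z = ρ ⁅⁅b i, b k⁆, b j⁆ z + ρ ⁅b i, ⁅b j, b k⁆⁆ z := by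
    rw [← LinearMap.add_apply, ← map_add, lie_lie, ← lie_skew (b j) ⁅b i, b k⁆]
    abel_nf
  have hk_ij := congrArg (ρ (b k)) (hcomm (b i) (b j))
  rw [map_add] at hk_ij
  rw [defect_apply, hz, hcomm_k j, hcomm_k i, map_add, map_add, hcomm_k' j i hkj.le,
    hcomm_k' i j hki.le]
  linear_combination (norm := module) hk_ij + hcomm ⁅b i, b k⁆ (b j) +
    hcomm (b i) ⁅b j, b k⁆ - hcomm ⁅b i, b j⁆ (b k) - hjac

lemma defect_eq_zero_of_monomial {n : ℕ}
    (h : ∀ μ : Multiset ι, Multiset.card μ < n → ∀ i j, defect b (b i) (b j) (monomial μ) = 0)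
    {p : Poly K ι} (hp : p ∈ degLT K ι n) (x y : g) : defect b x y p = 0 := by
  refine defect_eq_zero_of_basis b (fun i j => ?_) x y
  have : degLT K ι n ≤ LinearMap.ker (defect b (b i) (b j)) := by
    rw [degLT, supported_eq_span_single, Submodule.span_le]
    rintro _ ⟨μ, hμ, rfl⟩
    exact h μ hμ i j
  exact this hp

lemma defect_eq_zero_on_degLT (n : ℕ) :
    ∀ p ∈ degLT K ι n, ∀ x y, defect b x y p = 0 := by
  induction n with
  | zero => simp [degLT_zero]
  | succ n ih =>
    refine fun p hp => defect_eq_zero_of_monomial b (fun μ hμ i j => ?_) hp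
    rcases Nat.lt_succ_iff_lt_or_eq.1 hμ with hμ | hμ
    · exact ih _ (monomial_mem_degLT hμ) _ _
    rcases eq_or_ne μ 0 with rfl | h0
    · exact defect_monomial_of_forall_le b (by simp) i
    obtain ⟨k, ν, rfl, hk⟩ := exists_cons_forall_le h0
    have hkμ (a : ι) (ha : a ≤ k) : ∀ x ∈ k ::ₘ ν, a ≤ x := by
      simpa [ha] using fun x hx => ha.trans (hk x hx)
    by_cases hjk : j ≤ k
    · exact defect_monomial_of_forall_le b (hkμ j hjk) i
    by_cases hik : i ≤ k
    · rw [← neg_eq_zero, ← LinearMap.neg_apply, ← defect_swap]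
      exact defect_monomial_of_forall_le b (hkμ i hik) j
    rw [Multiset.card_cons] at hμ
    exact defect_monomial_cons b hk (not_le.1 hik) (not_le.1 hjk) (hμ ▸ ih)

theorem defect_eq_zero (x y : g) : defect b x y = 0 := by
  refine LinearMap.ext fun p => ?_
  obtain ⟨n, hn⟩ := exists_mem_degLT p
  exact defect_eq_zero_on_degLT b n p hn x y

def repLie : g →ₗ⁅K⁆ Module.End K (Poly K ι) :=
  { rep b with
    map_lie' := fun {x y} => by
      have h := defect_eq_zero b x y
      rw [defect, LinearMap.mk₂_apply] at h
      exact (sub_eq_zero.1 h).symm }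

@[simp] lemma repLie_apply (x : g) : repLie b x = rep b x := rfl

end Action

section Enveloping

variable {K : Type*} [Field K] {g : Type*} [LieRing g] [LieAlgebra K g]
variable {ι : Type*} (b : Module.Basis ι K g)

local notation "Ug" => UniversalEnvelopingAlgebra K g
local notation "ιU" => UniversalEnvelopingAlgebra.ι K

def word (l : List ι) : Ug := (l.map fun i => ιU (b i)).prod

@[simp] lemma word_nil : word b [] = 1 := rfl

@[simp] lemma word_cons (i : ι) (l : List ι) : word b (i :: l) = ιU (b i) * word b l := rfl

lemma word_append (l l' : List ι) : word b (l ++ l') = word b l * word b l' := by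
  simp [word]

lemma word_ofFn {n : ℕ} (f : Fin n → ι) :
    word b (List.ofFn f) = (List.ofFn fun i => ιU (b (f i))).prod := by
  rw [word, List.map_ofFn]
  rfl

lemma ιU_eq_sum (x : g) : ιU x = ∑ k ∈ (b.repr x).support, b.repr x k • ιU (b k) := by
  conv_lhs => rw [← b.linearCombination_repr x]
  simp [linearCombination_apply, Finsupp.sum]

lemma span_range_word : Submodule.span K (Set.range (word b)) = ⊤ := by
  set W := Submodule.span K (Set.range (word b))
  have hmul : W * W ≤ W := by
    rw [Submodule.span_mul_span, Submodule.span_le]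
    rintro _ ⟨_, ⟨l, rfl⟩, _, ⟨l', rfl⟩, rfl⟩
    exact Submodule.subset_span ⟨l ++ l', word_append b l l'⟩
  let S : Subalgebra K Ug := W.toSubalgebra (Submodule.subset_span ⟨[], rfl⟩)
    fun _ _ hu hv => hmul (Submodule.mul_mem_mul hu hv)
  have hS : Algebra.adjoin K (Set.range (ιU : g → Ug)) ≤ S := by
    refine Algebra.adjoin_le ?_
    rintro _ ⟨x, rfl⟩
    rw [ιU_eq_sum b]
    exact sum_mem fun k _ => Submodule.smul_mem _ _ (Submodule.subset_span ⟨[k], by simp⟩)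
  have htop : Algebra.adjoin K (Set.range (ιU : g → Ug)) = ⊤ :=
    adjoin_range_comp_ι_eq_top (f := UniversalEnvelopingAlgebra.mkAlgHom K g)
      (RingCon.mkₐ_surjective _)
  rw [htop, top_le_iff] at hS
  exact eq_top_iff.2 fun u _ => show u ∈ S by simp [hS]

def wordsLT (n : ℕ) : Submodule K Ug :=
  Submodule.span K {u | ∃ l : List ι, l.length < n ∧ word b l = u}

lemma word_mem_wordsLT {l : List ι} {n : ℕ} (h : l.length < n) : word b l ∈ wordsLT b n :=
  Submodule.subset_span ⟨l, h, rfl⟩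

lemma ιU_mul_mem_wordsLT (i : ι) {n : ℕ} {u : Ug} (hu : u ∈ wordsLT b n) :
    ιU (b i) * u ∈ wordsLT b (n + 1) := by
  induction hu using Submodule.span_induction with
  | mem u hu =>
    obtain ⟨l, hl, rfl⟩ := hu
    exact word_mem_wordsLT b (l := i :: l) (by simpa using hl)
  | zero => simp
  | add u v _ _ hu hv => simpa [mul_add] using add_mem hu hv
  | smul c u _ hu => simpa using Submodule.smul_mem _ c hu

/-- Swapping two adjacent letters changes a word by `[x_i, x_j]` times a shorter word. -/
lemma word_sub_word_mem_of_perm {l l' : List ι} (h : l.Perm l') :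
    word b l - word b l' ∈ wordsLT b l.length := by
  induction h with
  | nil => simp
  | cons i _ ih => simpa [← mul_sub] using ιU_mul_mem_wordsLT b i ih
  | swap i j l =>
    have hswap : word b (j :: i :: l) - word b (i :: j :: l) = ιU ⁅b j, b i⁆ * word b l := by
      simp only [word_cons, ← mul_assoc, ← sub_mul, LieHom.map_lie, Ring.lie_def]
    rw [hswap, ιU_eq_sum b, Finset.sum_mul]
    refine sum_mem fun k _ => ?_
    rw [smul_mul_assoc, ← word_cons]
    exact Submodule.smul_mem _ _ (word_mem_wordsLT b (by simp))
  | trans h _ ih ih' =>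
    rw [← h.length_eq] at ih'
    simpa using add_mem ih ih'

end Enveloping

section Evaluation

variable {K : Type*} [Field K] {g : Type*} [LieRing g] [LieAlgebra K g]
variable {ι : Type*} [Fintype ι] [LinearOrder ι] (b : Module.Basis ι K g)

local notation "Ug" => UniversalEnvelopingAlgebra K g

def ev : Ug →ₗ[K] Poly K ι :=
  LinearMap.applyₗ (monomial 0) ∘ₗ (UniversalEnvelopingAlgebra.lift K (repLie b)).toLinearMap

lemma ev_word_cons (i : ι) (l : List ι) :
    ev b (word b (i :: l)) = rep b (b i) (ev b (word b l)) := by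
  simp [ev]

lemma ev_word_sub_mem (l : List ι) : ev b (word b l) - monomial ↑l ∈ degLT K ι l.length := by
  induction l with
  | nil => simp [ev]
  | cons i l ih =>
    have hsplit : ev b (word b (i :: l)) - monomial ↑(i :: l) =
        rep b (b i) (ev b (word b l) - monomial ↑l) + (act b i ↑l - monomial (i ::ₘ ↑l)) := by
      rw [ev_word_cons, map_sub, rep_basis_monomial, Multiset.cons_coe]
      abel
    rw [hsplit]
    exact add_mem (rep_mem_degLT b _ ih) (by simpa using act_sub_monomial_mem b i ↑l)

end Evaluation

section Symmetrization

variable {K : Type*} [Field K] {g : Type*} [LieRing g] [LieAlgebra K g]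

local notation "Ug" => UniversalEnvelopingAlgebra K g
local notation "ιU" => UniversalEnvelopingAlgebra.ι K

variable (K) in
def symmetrize (n : ℕ) : MultilinearMap K (fun _ : Fin n => g) Ug :=
  (n.factorial : K)⁻¹ • ∑ σ : Equiv.Perm (Fin n),
    ((MultilinearMap.mkPiAlgebraFin K n Ug).compLinearMap
      fun _ => (ιU : g →ₗ⁅K⁆ Ug).toLinearMap).domDomCongr σ

lemma symmetrize_apply (n : ℕ) (x : Fin n → g) :
    symmetrize K n x = (n.factorial : K)⁻¹ •
      ∑ σ : Equiv.Perm (Fin n), (List.ofFn fun i => ιU (x (σ i))).prod := by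
  simp [symmetrize]

lemma symmetrize_comp_perm {n : ℕ} (x : Fin n → g) (τ : Equiv.Perm (Fin n)) :
    symmetrize K n (fun i => x (τ i)) = symmetrize K n x := by
  rw [symmetrize_apply, symmetrize_apply]
  congr 1
  exact Fintype.sum_equiv (Equiv.mulLeft τ) _ _ fun σ => rfl

variable {ι : Type*} (b : Module.Basis ι K g)

def symWord (l : List ι) : Ug := symmetrize K l.length fun i => b (l.get i)

lemma symWord_ofFn {n : ℕ} (f : Fin n → ι) :
    symWord b (List.ofFn f) = symmetrize K n fun i => b (f i) := by
  have hcast : ∀ {m} (h : m = n), symmetrize K m (fun i => b (f (Fin.cast h i))) =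
      symmetrize K n fun i => b (f i) := by
    rintro _ rfl
    rfl
  rw [symWord, ← hcast (List.length_ofFn (f := f))]
  simp [Fin.cast]

lemma symWord_eq_average (l : List ι) : symWord b l = (l.length.factorial : K)⁻¹ •
    ∑ σ : Equiv.Perm (Fin l.length), word b (List.ofFn fun i => l.get (σ i)) := by
  simp only [symWord, symmetrize_apply, word_ofFn]

lemma word_sub_symWord_mem [CharZero K] (l : List ι) :
    word b l - symWord b l ∈ wordsLT b l.length := by
  rw [← neg_mem_iff, neg_sub, symWord_eq_average]
  refine average_perm_sub_mem fun σ => ?_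
  simpa using word_sub_word_mem_of_perm b (ofFn_get_comp_perm l σ)

variable [LinearOrder ι]

def symMonomial (μ : Multiset ι) : Ug := symWord b (μ.sort (· ≤ ·))

lemma symWord_eq_symMonomial (l : List ι) : symWord b l = symMonomial b ↑l := by
  set σ := Tuple.sort l.get
  have hsorted : List.ofFn (fun i => l.get (σ i)) = (↑l : Multiset ι).sort (· ≤ ·) := by
    refine List.Perm.eq_of_sortedLE ?_ (Multiset.pairwise_sort _ _).sortedLE ?_
    · exact List.sortedLE_ofFn_iff.2 (Tuple.monotone_sort _)
    · rw [← Multiset.coe_eq_coe, Multiset.sort_eq]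
      exact Multiset.coe_eq_coe.2 (ofFn_get_comp_perm l σ)
  rw [symMonomial, ← hsorted, symWord_ofFn, symWord]
  exact (symmetrize_comp_perm _ σ).symm

lemma symmetrize_basis {n : ℕ} (f : Fin n → ι) :
    symmetrize K n (fun i => b (f i)) = symMonomial b ↑(List.ofFn f) := by
  rw [← symWord_ofFn, symWord_eq_symMonomial]

variable [CharZero K]

lemma word_mem_span_symMonomial (l : List ι) :
    word b l ∈ Submodule.span K (Set.range (symMonomial b)) := by
  induction hn : l.length using Nat.strong_induction_on generalizing l with
  | _ n ih =>
  have hlower : wordsLT b n ≤ Submodule.span K (Set.range (symMonomial b)) := by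
    rw [wordsLT, Submodule.span_le]
    rintro _ ⟨l', hl', rfl⟩
    exact ih _ hl' l' rfl
  have hsub := word_sub_symWord_mem b l
  rw [symWord_eq_symMonomial, hn] at hsub
  rw [← sub_add_cancel (word b l) (symMonomial b ↑l)]
  exact add_mem (hlower hsub) (Submodule.subset_span ⟨_, rfl⟩)

lemma span_range_symMonomial : Submodule.span K (Set.range (symMonomial b)) = ⊤ := by
  rw [eq_top_iff, ← span_range_word b, Submodule.span_le]
  rintro _ ⟨l, rfl⟩
  exact word_mem_span_symMonomial b l

end Symmetrization

section PBWBasis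

variable {K : Type*} [Field K] {g : Type*} [LieRing g] [LieAlgebra K g]
variable {ι : Type*} [Fintype ι] [LinearOrder ι] (b : Module.Basis ι K g)

local notation "Ug" => UniversalEnvelopingAlgebra K g

variable [CharZero K]

lemma ev_symWord_sub_mem (l : List ι) :
    ev b (symWord b l) - monomial ↑l ∈ degLT K ι l.length := by
  rw [symWord_eq_average, map_smul, map_sum]
  refine average_perm_sub_mem fun σ => ?_
  have hword := ev_word_sub_mem b (List.ofFn fun i => l.get (σ i))
  rwa [Multiset.coe_eq_coe.2 (ofFn_get_comp_perm l σ), List.length_ofFn] at hword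

lemma linearIndependent_symMonomial : LinearIndependent K (symMonomial b) := by
  refine LinearIndependent.of_comp (ev b)
    (linearIndependent_of_sub_single_mem_supported Multiset.card fun μ => ?_)
  have h := ev_symWord_sub_mem b (μ.sort (· ≤ ·))
  rw [Multiset.sort_eq, Multiset.length_sort] at h
  exact h

def symBasis : Module.Basis (Multiset ι) K Ug :=
  .mk (linearIndependent_symMonomial b) (span_range_symMonomial b).ge

lemma symBasis_apply (μ : Multiset ι) : symBasis b μ = symMonomial b μ :=
  Module.Basis.mk_apply _ _ _

end PBWBasis

section SymmetricAlgebra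

variable {K : Type*} [Field K] {g : Type*} [LieRing g] [LieAlgebra K g]

lemma adjoin_range_symIota : Algebra.adjoin K (Set.range (symIota K g)) = ⊤ :=
  adjoin_range_comp_ι_eq_top (RingQuot.mkAlgHom_surjective K (symRel K g))

lemma symIota_commute (x y : g) : Commute (symIota K g x) (symIota K g y) := by
  have h := RingQuot.mkAlgHom_rel K (s := symRel K g) ⟨x, y, rfl, rfl⟩
  rwa [map_mul, map_mul] at h

lemma sgAlg_mul_comm (u v : SgAlg K g) : u * v = v * u := by
  have hmem (w : SgAlg K g) : w ∈ Algebra.adjoin K (Set.range (symIota K g)) := by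
    simp [adjoin_range_symIota]
  refine Algebra.commute_of_mem_adjoin_of_forall_mem_commute (hmem v) ?_
  rintro _ ⟨y, rfl⟩
  refine (Algebra.commute_of_mem_adjoin_of_forall_mem_commute (hmem u) ?_).symm
  rintro _ ⟨x, rfl⟩
  exact symIota_commute y x

instance : CommRing (SgAlg K g) :=
  { (inferInstance : Ring (SgAlg K g)) with mul_comm := sgAlg_mul_comm }

variable {ι : Type*} (b : Module.Basis ι K g)

def sgEquivMvPolynomial : SgAlg K g ≃ₐ[K] MvPolynomial ι K :=
  .ofAlgHom
    (RingQuot.liftAlgHom K ⟨TensorAlgebra.lift K (b.constr K MvPolynomial.X), by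
      rintro _ _ ⟨x, y, rfl, rfl⟩
      simp only [map_mul, TensorAlgebra.lift_ι_apply, mul_comm]⟩)
    (MvPolynomial.aeval fun i => symIota K g (b i))
    (MvPolynomial.algHom_ext fun i => by simp [symIota])
    (RingQuot.ringQuot_ext' K _ _ (TensorAlgebra.hom_ext (b.ext fun i => by simp [symIota])))

@[simp] lemma sgEquivMvPolynomial_symm_X (i : ι) :
    (sgEquivMvPolynomial b).symm (MvPolynomial.X i) = symIota K g (b i) := by
  simp [sgEquivMvPolynomial]

variable [LinearOrder ι]

def sgBasis : Module.Basis (Multiset ι) K (SgAlg K g) :=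
  ((MvPolynomial.basisMonomials ι K).reindex Multiset.toFinsupp.symm.toEquiv).map
    (sgEquivMvPolynomial b).symm.toLinearEquiv

lemma sgBasis_ofFn {n : ℕ} (f : Fin n → ι) :
    sgBasis b ↑(List.ofFn f) = (List.ofFn fun i => symIota K g (b (f i))).prod := by
  have hX : (List.ofFn fun i => symIota K g (b (f i))) =
      (List.ofFn fun i => MvPolynomial.X (f i)).map (sgEquivMvPolynomial b).symm := by
    simp [List.map_ofFn, Function.comp_def]
  have hprod : (List.ofFn fun i => (MvPolynomial.X (f i) : MvPolynomial ι K)).prod =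
      ((↑(List.ofFn f) : Multiset ι).map MvPolynomial.X).prod := by
    rw [Multiset.map_coe, Multiset.prod_coe, List.map_ofFn]
    rfl
  rw [hX, ← map_list_prod, hprod, prod_map_X_eq_monomial, sgBasis, Module.Basis.map_apply,
    Module.Basis.reindex_apply, MvPolynomial.coe_basisMonomials]
  rfl

end SymmetricAlgebra

section SymmetrizationEquiv

variable {K : Type*} [Field K] [CharZero K] {g : Type*} [LieRing g] [LieAlgebra K g]
variable {ι : Type*} [Fintype ι] [LinearOrder ι] (b : Module.Basis ι K g)

def symmetrizationEquiv : SgAlg K g ≃ₗ[K] UniversalEnvelopingAlgebra K g :=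
  (sgBasis b).equiv (symBasis b) (Equiv.refl _)

lemma symmetrizationEquiv_prod {n : ℕ} (x : Fin n → g) :
    symmetrizationEquiv b (List.ofFn fun i => symIota K g (x i)).prod = symmetrize K n x := by
  have h : (symmetrizationEquiv b).toLinearMap.compMultilinearMap
      ((MultilinearMap.mkPiAlgebraFin K n (SgAlg K g)).compLinearMap fun _ => symIota K g) =
      symmetrize K n :=
    Module.Basis.ext_multilinear (fun _ => b) fun f => by
      simp [← sgBasis_ofFn, symmetrizationEquiv, symBasis_apply, symmetrize_basis]
  simpa using congr($h x)

end SymmetrizationEquiv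

end PBW

/-- The symmetrization map `ω : Sg → Ug`, `ω(x₁⋯xₙ) = (1/n!) Σ_{σ∈Sₙ} x_{σ(1)}⋯x_{σ(n)}`,
is a `K`-linear bijection. -/
theorem symmetrization_bijective (K : Type*) [Field K] [CharZero K]
    (g : Type*) [LieRing g] [LieAlgebra K g] [FiniteDimensional K g] :
    ∃ ω : SgAlg K g →ₗ[K] UniversalEnvelopingAlgebra K g,
      (∀ (n : ℕ) (x : Fin n → g),
        ω (List.ofFn fun i => symIota K g (x i)).prod
          = (n.factorial : K)⁻¹ •
            ∑ σ : Equiv.Perm (Fin n),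
              (List.ofFn fun i => UniversalEnvelopingAlgebra.ι K (x (σ i))).prod) ∧
      Function.Bijective ω := by
  let b := Module.finBasis K g
  refine ⟨PBW.symmetrizationEquiv b, fun n x => ?_, (PBW.symmetrizationEquiv b).bijective⟩
  rw [LinearEquiv.coe_coe, PBW.symmetrizationEquiv_prod, PBW.symmetrize_apply]
end
end

section
/- Let g = sl(2,ℂ) ⋉ n₃ as above, and let Sg be its symmetric algebra with the adjoint action extended by derivations. The subspace F = { g₃ ∈ S²g : [q,g₃] = 0 and [p,g₃] = 0 } of quadratic elements annihilated by the actions of q and p is exactly the 4-dimensional span of z², q² − 2ez, pq + hz, and p² + 2fz. -/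
/-!
A quadratic form `g` is determined by its constant Hessian `H`: applying Euler's identity twice
gives `2 • g = ∑ H i j • X i * X j`. Since the constant term of `∂ᵢ ∂ⱼ (X k * ∂ₗ g)` is
`δⱼₖ H i l + δᵢₖ H j l`, applying `∂ᵢ ∂ⱼ` to `[q, g] = 0` and `[p, g] = 0` gives linear equations
on `H`, whose solutions are exactly the Hessians of combinations of the four listed invariants.
-/

open MvPolynomial

noncomputable section

-- The symmetric algebra of `g = sl(2,ℂ) ⋉ n₃` is `ℂ[h,e,f,q,p,z]`, with
-- variables indexed `0 = h, 1 = e, 2 = f, 3 = q, 4 = p, 5 = z`.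

/-- The derivation `[q, ·]` of `Sg` extending `ad q`
(`h ↦ −q`, `f ↦ −p`, `p ↦ z`, others `↦ 0`). -/
def Dq (g : MvPolynomial (Fin 6) ℂ) : MvPolynomial (Fin 6) ℂ :=
  - (X 3 * pderiv 0 g) - X 4 * pderiv 2 g + X 5 * pderiv 4 g

/-- The derivation `[p, ·]` of `Sg` extending `ad p`
(`h ↦ p`, `e ↦ −q`, `q ↦ −z`, others `↦ 0`). -/
def Dp (g : MvPolynomial (Fin 6) ℂ) : MvPolynomial (Fin 6) ℂ :=
  X 4 * pderiv 0 g - X 3 * pderiv 1 g - X 5 * pderiv 3 g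

namespace MvPolynomial

variable {σ R : Type*} [CommSemiring R]

theorem pderiv_pderiv_comm (i j : σ) (φ : MvPolynomial σ R) :
    pderiv i (pderiv j φ) = pderiv j (pderiv i φ) := by
  classical
  ext m
  simp only [coeff_pderiv, Finsupp.add_apply, add_right_comm m (Finsupp.single i 1)]
  obtain rfl | hij := eq_or_ne i j
  · rfl
  simp [hij, hij.symm]
  ring

theorem coeff_zero_X_mul (i : σ) (φ : MvPolynomial σ R) : coeff 0 (X i * φ) = 0 := by
  classical simp [coeff_X_mul']

/-- For a quadratic form this is its (constant) Hessian. -/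
def hessianAtZero : MvPolynomial σ R →ₗ[R] Matrix σ σ R where
  toFun φ := Matrix.of fun i j => coeff 0 (pderiv i (pderiv j φ))
  map_add' φ ψ := by ext; simp
  map_smul' c φ := by ext; simp

theorem hessianAtZero_apply (φ : MvPolynomial σ R) (i j : σ) :
    hessianAtZero φ i j = coeff 0 (pderiv i (pderiv j φ)) :=
  rfl

theorem hessianAtZero_comm (φ : MvPolynomial σ R) (i j : σ) :
    hessianAtZero φ i j = hessianAtZero φ j i := by
  rw [hessianAtZero_apply, hessianAtZero_apply, pderiv_pderiv_comm i j]

theorem hessianAtZero_X_mul_pderiv [DecidableEq σ] (k l i j : σ) (φ : MvPolynomial σ R) :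
    hessianAtZero (X k * pderiv l φ) i j =
      (if j = k then hessianAtZero φ i l else 0) + (if i = k then hessianAtZero φ j l else 0) := by
  simp only [hessianAtZero_apply]
  rw [pderiv_mul, pderiv_X, map_add, pderiv_mul, pderiv_mul, pderiv_X]
  rw [coeff_add, coeff_add, coeff_add, coeff_zero_X_mul]
  simp only [Pi.single_apply, eq_comm (a := k)]
  split_ifs <;> simp

theorem IsHomogeneous.two_smul_eq_sum_hessianAtZero [Fintype σ] {φ : MvPolynomial σ R}
    (h : φ.IsHomogeneous 2) :
    2 • φ = ∑ i, ∑ j, C (hessianAtZero φ j i) * X i * X j := by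
  rw [← h.sum_X_mul_pderiv]
  refine Finset.sum_congr rfl fun i _ => ?_
  have hi : (pderiv i φ).IsHomogeneous 1 := h.pderiv
  conv_lhs => rw [← one_smul ℕ (pderiv i φ), ← hi.sum_X_mul_pderiv]
  rw [Finset.mul_sum]
  refine Finset.sum_congr rfl fun j _ => ?_
  have hij : (pderiv j (pderiv i φ)).IsHomogeneous 0 := hi.pderiv
  rw [totalDegree_eq_zero_iff_eq_C.mp ((totalDegree_zero_iff_isHomogeneous σ).mpr hij)]
  simp only [hessianAtZero_apply]
  ring

end MvPolynomial

/-- The Hessian of `a • z² + b • (q² − 2ez) + (2 * c) • (pq + hz) + d • (p² + 2fz)`. -/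
def invariantHessian (a b c d : ℂ) : Matrix (Fin 6) (Fin 6) ℂ :=
  !![0, 0, 0, 0, 0, c;
     0, 0, 0, 0, 0, -b;
     0, 0, 0, 0, 0, d;
     0, 0, 0, b, c, 0;
     0, 0, 0, c, d, 0;
     c, -b, d, 0, 0, a]

theorem exists_hessianAtZero_eq_invariantHessian {g : MvPolynomial (Fin 6) ℂ}
    (hq : Dq g = 0) (hp : Dp g = 0) :
    ∃ a b c d, hessianAtZero g = invariantHessian a b c d := by
  have hq' : ∀ i j, hessianAtZero (Dq g) i j = 0 := by simp [hq]
  have hp' : ∀ i j, hessianAtZero (Dp g) i j = 0 := by simp [hp]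
  have hsymm : ∀ i j : Fin 6, j < i → hessianAtZero g i j = hessianAtZero g j i :=
    fun i j _ => hessianAtZero_comm g i j
  simp only [Dq, Dp, map_add, map_sub, map_neg, Matrix.add_apply, Matrix.sub_apply,
    Matrix.neg_apply, hessianAtZero_X_mul_pderiv] at hq' hp'
  simp [Fin.forall_fin_succ] at hq' hp' hsymm
  refine ⟨hessianAtZero g 5 5, hessianAtZero g 3 3, hessianAtZero g 3 4, hessianAtZero g 4 4, ?_⟩
  ext i j
  fin_cases i <;> fin_cases j <;> simp [invariantHessian] <;> grind

def invariantQuadratics : Set (MvPolynomial (Fin 6) ℂ) :=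
  {X 5 ^ 2, X 3 ^ 2 - 2 * X 1 * X 5, X 4 * X 3 + X 0 * X 5, X 4 ^ 2 + 2 * X 2 * X 5}

theorem mem_span_of_Dq_eq_zero_of_Dp_eq_zero {g : MvPolynomial (Fin 6) ℂ}
    (hg : g.IsHomogeneous 2) (hq : Dq g = 0) (hp : Dp g = 0) :
    g ∈ Submodule.span ℂ invariantQuadratics := by
  obtain ⟨a, b, c, d, hH⟩ := exists_hessianAtZero_eq_invariantHessian hq hp
  have h2 : (2 : ℂ) • g = a • X 5 ^ 2 + b • (X 3 ^ 2 - 2 * X 1 * X 5)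
      + (2 * c) • (X 4 * X 3 + X 0 * X 5) + d • (X 4 ^ 2 + 2 * X 2 * X 5) := by
    rw [two_smul, ← two_nsmul, hg.two_smul_eq_sum_hessianAtZero, hH]
    simp [Fin.sum_univ_six, invariantHessian, smul_eq_C_mul, map_ofNat]
    ring
  rw [← Submodule.smul_mem_iff _ (two_ne_zero : (2 : ℂ) ≠ 0), h2]
  refine add_mem (add_mem (add_mem ?_ ?_) ?_) ?_ <;>
    exact Submodule.smul_mem _ _ (Submodule.subset_span (by simp [invariantQuadratics]))

def qDerivation : Derivation ℂ (MvPolynomial (Fin 6) ℂ) (MvPolynomial (Fin 6) ℂ) :=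
  -((X 3 : MvPolynomial (Fin 6) ℂ) • pderiv 0) - (X 4 : MvPolynomial (Fin 6) ℂ) • pderiv 2
    + (X 5 : MvPolynomial (Fin 6) ℂ) • pderiv 4

def pDerivation : Derivation ℂ (MvPolynomial (Fin 6) ℂ) (MvPolynomial (Fin 6) ℂ) :=
  (X 4 : MvPolynomial (Fin 6) ℂ) • pderiv 0 - (X 3 : MvPolynomial (Fin 6) ℂ) • pderiv 1
    - (X 5 : MvPolynomial (Fin 6) ℂ) • pderiv 3

theorem qDerivation_apply (g : MvPolynomial (Fin 6) ℂ) : qDerivation g = Dq g := by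
  simp [qDerivation, Dq]

theorem pDerivation_apply (g : MvPolynomial (Fin 6) ℂ) : pDerivation g = Dp g := by
  simp [pDerivation, Dp]

theorem Dq_eq_zero_and_Dp_eq_zero_of_mem_span {g : MvPolynomial (Fin 6) ℂ}
    (hg : g ∈ Submodule.span ℂ invariantQuadratics) : Dq g = 0 ∧ Dp g = 0 := by
  have hle : Submodule.span ℂ invariantQuadratics ≤
      LinearMap.ker (qDerivation : MvPolynomial (Fin 6) ℂ →ₗ[ℂ] MvPolynomial (Fin 6) ℂ) ⊓
        LinearMap.ker (pDerivation : MvPolynomial (Fin 6) ℂ →ₗ[ℂ] MvPolynomial (Fin 6) ℂ) := by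
    have pderiv_two (i : Fin 6) : pderiv i (2 : MvPolynomial (Fin 6) ℂ) = 0 := by
      simpa using (pderiv i).map_natCast 2
    rw [Submodule.span_le]
    rintro _ (rfl | rfl | rfl | rfl) <;> refine Submodule.mem_inf.mpr ⟨?_, ?_⟩ <;>
      simp [qDerivation, pDerivation, pderiv_X, pderiv_two] <;> ring
  simpa [qDerivation_apply, pDerivation_apply] using hle hg

/-- The subspace `F = { g₃ ∈ S²g : [q,g₃] = [p,g₃] = 0 }` of quadratic elements of
`Sg` killed by the actions of `q` and `p` is exactly the span of
`z²`, `q² − 2ez`, `pq + hz`, `p² + 2fz`. -/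
theorem sl2_heisenberg_invariant_quadratics (g₃ : MvPolynomial (Fin 6) ℂ)
    (hdeg : g₃.IsHomogeneous 2) :
    (Dq g₃ = 0 ∧ Dp g₃ = 0) ↔
      g₃ ∈ Submodule.span ℂ
        ({ X 5 ^ 2,
           X 3 ^ 2 - 2 * X 1 * X 5,
           X 4 * X 3 + X 0 * X 5,
           X 4 ^ 2 + 2 * X 2 * X 5 } : Set (MvPolynomial (Fin 6) ℂ)) :=
  ⟨fun ⟨hq, hp⟩ => mem_span_of_Dq_eq_zero_of_Dp_eq_zero hdeg hq hp,
    Dq_eq_zero_and_Dp_eq_zero_of_mem_span⟩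
end
end
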